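/- Let α, β, γ, δ ∈ ℝ and let W₂ = e^{iα}·R_z(β)·R_y(γ)·R_z(δ). Let p₁, p₂, p₃ ≥ 0 with p₁ + p₂ + p₃ ≤ 1, and define ρ_f = p₁·W₂·|0⟩⟨0|·W₂† + p₂·σx·W₂·|0⟩⟨0|·W₂†·σx + p₃·W₂·σx·|0⟩⟨0|·σx·W₂† + (1−p₁−p₂−p₃)·σx·W₂·σx·|0⟩⟨0|·σx·W₂†·σx. Then tr(ρ_f·P) = (2·cos²(γ/2) − 1)·(1 − 2p₂ − 2p₃). -/

import Mathlib

open Matrix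

noncomputable section

def σx : Matrix (Fin 2) (Fin 2) ℂ := !![0, 1; 1, 0]

/-- The projector |0⟩⟨0|. -/
def P0 : Matrix (Fin 2) (Fin 2) ℂ := !![1, 0; 0, 0]

/-- The projector |1⟩⟨1|. -/
def P1 : Matrix (Fin 2) (Fin 2) ℂ := !![0, 0; 0, 1]

/-- The payoff observable `P = |0⟩⟨0| − |1⟩⟨1|`. -/
def Pobs : Matrix (Fin 2) (Fin 2) ℂ := P0 - P1

/-- The rotation matrix about the y-axis. -/
def Ry (θ : ℝ) : Matrix (Fin 2) (Fin 2) ℂ :=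
  !![(Real.cos (θ / 2) : ℂ), -(Real.sin (θ / 2) : ℂ);
     (Real.sin (θ / 2) : ℂ), (Real.cos (θ / 2) : ℂ)]

/-- The rotation matrix about the z-axis: `R_z(θ) = diag(e^{−iθ/2}, e^{iθ/2})`. -/
def Rz (θ : ℝ) : Matrix (Fin 2) (Fin 2) ℂ :=
  !![Complex.exp (-(θ / 2) * Complex.I), 0; 0, Complex.exp ((θ / 2) * Complex.I)]

/-! With `t U = tr (U |0⟩⟨0| Uᴴ P)`, the payoff of `W₂ = e^{iα} R_z(β) R_y(γ) R_z(δ)` is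
`t W₂ = cos γ`: the phase and the outer `R_z(β)` are unitaries commuting with the diagonal `P`,
and the inner `R_z(δ)` commutes with `|0⟩⟨0|`, so only `R_y(γ)` is left.
Conjugating the state by `σx` negates the payoff because `σx P σx = -P`; so does replacing
`|0⟩⟨0|` by `σx |0⟩⟨0| σx = 1 - |0⟩⟨0|`, because `W₂` is unitary and `tr P = 0`.
The four terms therefore contribute `cos γ · (p₁ - p₂ - p₃ + (1 - p₁ - p₂ - p₃))`. -/

section Conjugation

variable {n R : Type*} [Fintype n] [DecidableEq n] [CommRing R] [StarRing R]
  {U : Matrix n n R}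

theorem Matrix.mul_mul_conjTranspose_of_commute (hU : U ∈ unitaryGroup n R) {X : Matrix n n R}
    (hUX : Commute U X) : U * X * Uᴴ = X := by
  rw [hUX.eq, Matrix.mul_assoc, ← star_eq_conjTranspose, mem_unitaryGroup_iff.mp hU,
    Matrix.mul_one]

theorem Matrix.trace_conj_mul_of_commute (hU : U ∈ unitaryGroup n R) {P : Matrix n n R}
    (hUP : Commute U P) (X : Matrix n n R) : trace (U * X * Uᴴ * P) = trace (X * P) := by
  have hP : Uᴴ * P * U = P := by
    rw [Matrix.mul_assoc, ← hUP.eq, ← Matrix.mul_assoc, ← star_eq_conjTranspose,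
      mem_unitaryGroup_iff'.mp hU, Matrix.one_mul]
  calc trace (U * X * Uᴴ * P) = trace (X * (Uᴴ * P * U)) := by
        rw [Matrix.mul_assoc U, Matrix.mul_assoc U, trace_mul_comm U]
        simp only [Matrix.mul_assoc]
    _ = trace (X * P) := by rw [hP]

theorem Matrix.trace_conj_one_sub_mul (hU : U ∈ unitaryGroup n R) (X P : Matrix n n R) :
    trace (U * (1 - X) * Uᴴ * P) = trace P - trace (U * X * Uᴴ * P) := by
  rw [Matrix.mul_sub, Matrix.mul_one, Matrix.sub_mul, Matrix.sub_mul, trace_sub,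
    ← star_eq_conjTranspose, mem_unitaryGroup_iff.mp hU, Matrix.one_mul]

end Conjugation

theorem exp_ofReal_mul_I_mem_unitary (t : ℝ) : Complex.exp (t * Complex.I) ∈ unitary ℂ := by
  rw [Unitary.mem_iff_star_mul_self, Complex.star_def, ← Complex.exp_conj, ← Complex.exp_add]
  simp

theorem Rz_eq_diagonal (θ : ℝ) :
    Rz θ = diagonal ![Complex.exp (-(θ / 2) * Complex.I), Complex.exp ((θ / 2) * Complex.I)] := by
  rw [Rz, diagonal_fin_two]; rfl

theorem Rz_mem_unitaryGroup (θ : ℝ) : Rz θ ∈ unitaryGroup (Fin 2) ℂ := by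
  rw [mem_unitaryGroup_iff, Rz_eq_diagonal, star_eq_conjTranspose, diagonal_conjTranspose,
    diagonal_mul_diagonal, ← diagonal_one]
  congr 1
  ext i
  fin_cases i
  · simpa [mul_comm] using Unitary.star_mul_self_of_mem (exp_ofReal_mul_I_mem_unitary (-(θ / 2)))
  · simpa [mul_comm] using Unitary.star_mul_self_of_mem (exp_ofReal_mul_I_mem_unitary (θ / 2))

theorem Ry_conjTranspose (θ : ℝ) : (Ry θ)ᴴ = Ry (-θ) := by
  rw [Ry, Ry]
  ext i j
  fin_cases i <;> fin_cases j <;> simp [neg_div, -Complex.ofReal_cos, -Complex.ofReal_sin]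

theorem Ry_mem_unitaryGroup (θ : ℝ) : Ry θ ∈ unitaryGroup (Fin 2) ℂ := by
  have h : (Real.cos (θ / 2) : ℂ) ^ 2 + (Real.sin (θ / 2) : ℂ) ^ 2 = 1 := by
    exact_mod_cast Real.cos_sq_add_sin_sq (θ / 2)
  rw [mem_unitaryGroup_iff, star_eq_conjTranspose, Ry_conjTranspose, Ry, Ry, mul_fin_two,
    one_fin_two, neg_div, Real.cos_neg, Real.sin_neg, Complex.ofReal_neg]
  ext i j
  fin_cases i <;> fin_cases j <;> simp [-Complex.ofReal_cos, -Complex.ofReal_sin]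
  · linear_combination h
  · ring
  · ring
  · linear_combination h

theorem P0_eq_diagonal : P0 = diagonal ![1, 0] := by
  rw [P0, diagonal_fin_two]; rfl

theorem Pobs_eq_diagonal : Pobs = diagonal ![1, -1] := by
  rw [Pobs, P0, P1, diagonal_fin_two]; ext i j; fin_cases i <;> fin_cases j <;> simp

theorem commute_Rz_P0 (θ : ℝ) : Commute (Rz θ) P0 := by
  rw [Rz_eq_diagonal, P0_eq_diagonal]; exact commute_diagonal _ _

theorem commute_Rz_Pobs (θ : ℝ) : Commute (Rz θ) Pobs := by
  rw [Rz_eq_diagonal, Pobs_eq_diagonal]; exact commute_diagonal _ _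

theorem trace_Pobs : trace Pobs = 0 := by
  simp [Pobs_eq_diagonal]

theorem σx_mul_P0_mul_σx : σx * P0 * σx = 1 - P0 := by
  rw [σx, P0]; ext i j; fin_cases i <;> fin_cases j <;> simp

theorem trace_σx_mul_mul_σx_mul_Pobs (A : Matrix (Fin 2) (Fin 2) ℂ) :
    trace (σx * A * σx * Pobs) = -trace (A * Pobs) := by
  have hσ : σx * Pobs * σx = -Pobs := by
    rw [σx, Pobs, P0, P1]; ext i j; fin_cases i <;> fin_cases j <;> simp
  calc trace (σx * A * σx * Pobs) = trace (A * (σx * Pobs * σx)) := by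
        rw [Matrix.mul_assoc σx, Matrix.mul_assoc σx, trace_mul_comm σx]
        simp only [Matrix.mul_assoc]
    _ = -trace (A * Pobs) := by rw [hσ, Matrix.mul_neg, trace_neg]

theorem trace_Ry_mul_P0_mul_conjTranspose_mul_Pobs (θ : ℝ) :
    trace (Ry θ * P0 * (Ry θ)ᴴ * Pobs) = Real.cos θ := by
  have hcos : Real.cos θ = Real.cos (θ / 2) ^ 2 - Real.sin (θ / 2) ^ 2 := by
    rw [← Real.cos_two_mul', mul_div_cancel₀ θ two_ne_zero]
  rw [Ry_conjTranspose, Ry, Ry, P0_eq_diagonal, Pobs_eq_diagonal, diagonal_fin_two,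
    diagonal_fin_two, mul_fin_two, mul_fin_two, mul_fin_two, trace_fin_two_of, neg_div,
    Real.cos_neg, Real.sin_neg, hcos]
  simp only [Complex.ofReal_neg, Complex.ofReal_sub, Complex.ofReal_pow, cons_val_zero,
    cons_val_one]
  ring

theorem trace_phase_smul_Rz_Ry_Rz_mul_P0_mul_conjTranspose_mul_Pobs (α β γ δ : ℝ) :
    trace (Complex.exp ((α : ℂ) * Complex.I) • (Rz β * Ry γ * Rz δ) * P0 *
      (Complex.exp ((α : ℂ) * Complex.I) • (Rz β * Ry γ * Rz δ))ᴴ * Pobs) = Real.cos γ := by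
  set W := Complex.exp ((α : ℂ) * Complex.I) • (Rz β * Ry γ * Rz δ)
  set A := Complex.exp ((α : ℂ) * Complex.I) • Rz β
  have hA : A ∈ unitaryGroup (Fin 2) ℂ :=
    Unitary.smul_mem_of_mem (exp_ofReal_mul_I_mem_unitary α) (Rz_mem_unitaryGroup β)
  have hW : W = A * Ry γ * Rz δ := by simp only [W, A, smul_mul]
  calc trace (W * P0 * Wᴴ * Pobs)
        = trace (A * (Ry γ * (Rz δ * P0 * (Rz δ)ᴴ) * (Ry γ)ᴴ) * Aᴴ * Pobs) := by
          simp only [hW, conjTranspose_mul, Matrix.mul_assoc]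
    _ = trace (Ry γ * P0 * (Ry γ)ᴴ * Pobs) := by
          rw [mul_mul_conjTranspose_of_commute (Rz_mem_unitaryGroup δ) (commute_Rz_P0 δ),
            trace_conj_mul_of_commute hA ((commute_Rz_Pobs β).smul_left _)]
    _ = Real.cos γ := trace_Ry_mul_P0_mul_conjTranspose_mul_Pobs γ

theorem payoff_against_classical_mixture_general (α β γ δ : ℝ)
    (W₂ : Matrix (Fin 2) (Fin 2) ℂ)
    (hW₂ : W₂ = Complex.exp ((α : ℂ) * Complex.I) • (Rz β * Ry γ * Rz δ))
    (p₁ p₂ p₃ : ℝ) :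
    Matrix.trace
      (((p₁ : ℂ) • (W₂ * P0 * W₂ᴴ)
        + (p₂ : ℂ) • (σx * W₂ * P0 * W₂ᴴ * σx)
        + (p₃ : ℂ) • (W₂ * σx * P0 * σx * W₂ᴴ)
        + ((1 - p₁ - p₂ - p₃ : ℝ) : ℂ) • (σx * W₂ * σx * P0 * σx * W₂ᴴ * σx)) * Pobs)
      = (((2 * Real.cos (γ / 2) ^ 2 - 1) * (1 - 2 * p₂ - 2 * p₃) : ℝ) : ℂ) := by
  have hW : W₂ ∈ unitaryGroup (Fin 2) ℂ := hW₂ ▸ Unitary.smul_mem_of_mem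
    (exp_ofReal_mul_I_mem_unitary α) (mul_mem (mul_mem (Rz_mem_unitaryGroup β)
      (Ry_mem_unitaryGroup γ)) (Rz_mem_unitaryGroup δ))
  have hpayoff : trace (W₂ * P0 * W₂ᴴ * Pobs) = Real.cos γ := hW₂ ▸
    trace_phase_smul_Rz_Ry_Rz_mul_P0_mul_conjTranspose_mul_Pobs α β γ δ
  have hσ : trace (σx * W₂ * P0 * W₂ᴴ * σx * Pobs) = -Real.cos γ := by
    rw [← hpayoff]
    simpa only [Matrix.mul_assoc] using trace_σx_mul_mul_σx_mul_Pobs (W₂ * P0 * W₂ᴴ)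
  have hflip : trace (W₂ * σx * P0 * σx * W₂ᴴ * Pobs) = -Real.cos γ := by
    have h := trace_conj_one_sub_mul hW P0 Pobs
    rw [← σx_mul_P0_mul_σx, trace_Pobs, hpayoff, zero_sub] at h
    simpa only [Matrix.mul_assoc] using h
  have hσflip : trace (σx * W₂ * σx * P0 * σx * W₂ᴴ * σx * Pobs) = Real.cos γ := by
    have h := trace_σx_mul_mul_σx_mul_Pobs (W₂ * σx * P0 * σx * W₂ᴴ)
    rw [hflip, neg_neg] at h
    simpa only [Matrix.mul_assoc] using h
  have hcos : 2 * Real.cos (γ / 2) ^ 2 - 1 = Real.cos γ := by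
    rw [Real.cos_sq, mul_div_cancel₀ γ two_ne_zero]; ring
  simp only [Matrix.add_mul, Matrix.smul_mul, trace_add, trace_smul, smul_eq_mul, hpayoff, hσ,
    hflip, hσflip, hcos]
  push_cast
  ring

theorem payoff_against_classical_mixture (α β γ δ : ℝ)
    (W₂ : Matrix (Fin 2) (Fin 2) ℂ)
    (hW₂ : W₂ = Complex.exp ((α : ℂ) * Complex.I) • (Rz β * Ry γ * Rz δ))
    (p₁ p₂ p₃ : ℝ) (h₁ : 0 ≤ p₁) (h₂ : 0 ≤ p₂) (h₃ : 0 ≤ p₃)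
    (hsum : p₁ + p₂ + p₃ ≤ 1) :
    Matrix.trace
      (((p₁ : ℂ) • (W₂ * P0 * W₂ᴴ)
        + (p₂ : ℂ) • (σx * W₂ * P0 * W₂ᴴ * σx)
        + (p₃ : ℂ) • (W₂ * σx * P0 * σx * W₂ᴴ)
        + ((1 - p₁ - p₂ - p₃ : ℝ) : ℂ) • (σx * W₂ * σx * P0 * σx * W₂ᴴ * σx)) * Pobs)
      = (((2 * Real.cos (γ / 2) ^ 2 - 1) * (1 - 2 * p₂ - 2 * p₃) : ℝ) : ℂ) :=
  payoff_against_classical_mixture_general α β γ δ W₂ hW₂ p₁ p₂ p₃
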